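/- arXiv:2312.03235 — 2 statements merged into one kernel-verified Lean document; each statement's English description precedes it below -/
import Mathlib

section
/- Let n ≥ 1 and let e : Fin n → ℝ with e j > 0 be the execution times of a single task type on n machines, and let c > 0. Then the minimum makespan over all allocations n' : Fin n → ℝ with n' j ≥ 0 and Σ_j n' j = c — namely min over such n' of max_j (n' j · e j) — equals (c/n) · H, where H = n / Σ_j (1 / e j) is the harmonic mean of the execution times (which is the HEET score of this single-task-type system). Hence the predicted makespan formula τ = (c/n) · HEET is exact for a single task type. -/
/-- For a single task type with execution times `e j > 0` and workload `c > 0`,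
the minimum makespan over all nonnegative allocations of `c` tasks equals `(c/n)·H`, where
`H = n / Σ_j (1/e j)` is the harmonic mean of the execution times (the HEET score), so the
predicted makespan `τ = (c/n)·HEET` is exact. -/
theorem stmt_8 {n : ℕ} (hn : 1 ≤ n) (e : Fin n → ℝ) (he : ∀ j, 0 < e j)
    (c : ℝ) (hc : 0 < c)
    (H : ℝ) (hH : H = n / ∑ j, 1 / e j) :
    IsLeast {τ : ℝ | ∃ n' : Fin n → ℝ, (∀ j, 0 ≤ n' j) ∧ (∑ j, n' j = c) ∧
        τ = ⨆ j, n' j * e j} ((c / n) * H) := by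
  haveI : Nonempty (Fin n) := Fin.pos_iff_nonempty.mp hn
  have hn0 : (0:ℝ) < n := by exact_mod_cast hn
  set S : ℝ := ∑ j, 1 / e j with hS
  have hSpos : 0 < S := Finset.sum_pos (fun j _ => one_div_pos.mpr (he j)) ⟨⟨0, hn⟩, Finset.mem_univ _⟩
  have hval : (c / n) * H = c / S := by
    rw [hH]; field_simp
  rw [hval]
  constructor
  · refine ⟨fun j => (c / S) * (1 / e j), fun j => mul_nonneg (div_pos hc hSpos).le (one_div_pos.mpr (he j)).le, ?_, ?_⟩
    · rw [← Finset.mul_sum, ← hS]; field_simp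
    · have : ∀ j : Fin n, (c / S) * (1 / e j) * e j = c / S := by
        intro j
        rw [div_mul_eq_mul_div, mul_one_div, div_mul_eq_mul_div,
          div_mul_cancel₀ _ (he j).ne']
      simp only [this, ciSup_const]
  · rintro τ ⟨n', hpos, hsum, rfl⟩
    have hbdd : BddAbove (Set.range fun j => n' j * e j) :=
      Set.Finite.bddAbove (Set.finite_range _)
    have hle : ∀ j, n' j * e j ≤ ⨆ j, n' j * e j := fun j => le_ciSup hbdd j
    have key : c ≤ (⨆ j, n' j * e j) * S := by
      rw [← hsum, hS, Finset.mul_sum]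
      refine Finset.sum_le_sum fun j _ => ?_
      have h1 : n' j = n' j * e j * (1 / e j) := by
        rw [mul_one_div, mul_div_cancel_right₀ _ (he j).ne']
      rw [h1]
      exact mul_le_mul_of_nonneg_right (hle j) (one_div_pos.mpr (he j)).le
    rw [div_le_iff₀ hSpos]
    exact key
end

section
/- Let e : Fin m → Fin n → ℝ be an EET matrix with e i j > 0, n ≥ 1, m ≥ 1, let ω : Fin m → ℝ with ω i ≥ 0 and Σ_i ω i = 1, and set e*_j = Σ_i ω i · e i j with e*_j > 0 for all j. For any c > 0, the minimum over allocations n' : Fin n → ℝ (n' j ≥ 0, Σ_j n' j = c) of the makespan max_j (n' j · e*_j) equals (c/n) · HEET, where HEET = n / Σ_j (1 / e*_j). That is, when each machine j processes its share of a mixed workload at the average time e*_j per task, the predicted makespan τ = (c/n)·HEET is the true optimal makespan. -/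
/-- With per-machine average times `e*_j = Σ_i ω i · e i j > 0` and
`HEET = n / Σ_j (1/e*_j)`, for any `c > 0` the minimum over nonnegative allocations of `c`
tasks of the makespan `max_j (n' j · e*_j)` equals `(c/n)·HEET`: the predicted makespan
`τ = (c/n)·HEET` is the true optimal makespan. -/
theorem stmt_10 {m n : ℕ} (hm : 1 ≤ m) (hn : 1 ≤ n)
    (e : Fin m → Fin n → ℝ) (he : ∀ i j, 0 < e i j)
    (ω : Fin m → ℝ) (hω : ∀ i, 0 ≤ ω i) (hω1 : ∑ i, ω i = 1)
    (estar : Fin n → ℝ) (hestar : ∀ j, estar j = ∑ i, ω i * e i j)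
    (hpos : ∀ j, 0 < estar j)
    (HEET : ℝ) (hHEET : HEET = n / ∑ j, 1 / estar j)
    (c : ℝ) (hc : 0 < c) :
    IsLeast {τ : ℝ | ∃ n' : Fin n → ℝ, (∀ j, 0 ≤ n' j) ∧ (∑ j, n' j = c) ∧
        τ = ⨆ j, n' j * estar j} ((c / n) * HEET) := by
  haveI : Nonempty (Fin n) := ⟨⟨0, hn⟩⟩
  set S : ℝ := ∑ j, 1 / estar j with hS
  have hSpos : 0 < S := Finset.sum_pos (fun j _ => one_div_pos.mpr (hpos j)) ⟨⟨0, hn⟩, Finset.mem_univ _⟩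
  have hn0 : (n : ℝ) ≠ 0 := Nat.cast_ne_zero.mpr (by omega)
  have hval : (c / n) * HEET = c / S := by
    rw [hHEET]; field_simp
  rw [hval]
  constructor
  · refine ⟨fun j => (c / S) / estar j, fun j => (div_pos (div_pos hc hSpos) (hpos j)).le,
      ?_, ?_⟩
    · have h1 : ∑ j, (c / S) / estar j = (c / S) * S := by
        rw [hS, Finset.mul_sum]
        exact Finset.sum_congr rfl (fun j _ => by rw [mul_one_div, div_div])
      rw [h1, div_mul_cancel₀ _ hSpos.ne']
    · have h2 : ∀ j : Fin n, (c / S) / estar j * estar j = c / S := fun j =>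
        div_mul_cancel₀ _ (hpos j).ne'
      simp only [h2, ciSup_const]
  · rintro τ ⟨n', hn'0, hn'sum, rfl⟩
    have hbdd : BddAbove (Set.range fun j => n' j * estar j) :=
      Set.Finite.bddAbove (Set.finite_range _)
    have hle : ∀ j, n' j ≤ (⨆ j, n' j * estar j) * (1 / estar j) := by
      intro j
      have h1 : n' j * estar j ≤ ⨆ j, n' j * estar j := le_ciSup hbdd j
      rw [mul_one_div, le_div_iff₀ (hpos j)]
      exact h1
    have hsum : c ≤ (⨆ j, n' j * estar j) * S := by
      rw [← hn'sum, hS, Finset.mul_sum]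
      exact Finset.sum_le_sum fun j _ => hle j
    rw [div_le_iff₀ hSpos]
    exact hsum
end
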